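/- arXiv:1609.02437 — 3 statements merged into one kernel-verified Lean document; each statement's English description precedes it below -/
import Mathlib

section
/- A smooth function z : ℝ → ℝ satisfies z'(s) - z'''(s) = τ₀ for a constant τ₀ if and only if z(s) = τ₀ s + c₁ e^s - c₂ e^{-s} + c₃ for some constants c₁, c₂, c₃ ∈ ℝ. Consequently, a hyperbolic cylindrical curve (cosh s, sinh s, z(s)) in I³_p has constant torsion τ₀ if and only if z has this form. -/
open Real

private lemma smooth_iter (z : ℝ → ℝ) (hz : ContDiff ℝ (⊤ : ℕ∞) z) (n : ℕ) :
    ContDiff ℝ (⊤ : ℕ∞) (iteratedDeriv n z) := by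
  rw [iteratedDeriv_eq_iterate]
  exact ContDiff.iterate_deriv n (hz.of_le (by simp))

private lemma eq_exp_of_deriv_eq (f : ℝ → ℝ) (hf : Differentiable ℝ f)
    (h : ∀ s, deriv f s = f s) : ∀ s, f s = f 0 * Real.exp s := by
  have key : ∀ s, f s * Real.exp (-s) = f 0 := by
    have hd : ∀ s, deriv (fun s => f s * Real.exp (-s)) s = 0 := by
      intro s
      have h1 : HasDerivAt (fun s : ℝ => Real.exp (-s)) (Real.exp (-s) * (-1)) s :=
        (hasDerivAt_neg s).exp
      have h2 : HasDerivAt f (f s) s := h s ▸ (hf s).hasDerivAt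
      have := h2.mul h1
      rw [(show HasDerivAt (fun s => f s * Real.exp (-s)) _ s from this).deriv]; ring
    have hc := is_const_of_deriv_eq_zero
      (f := fun s => f s * Real.exp (-s))
      (hf.mul ((differentiable_neg).exp)) hd
    intro s
    have := hc s 0
    simpa using this
  intro s
  have := key s
  have hne : Real.exp (-s) ≠ 0 := Real.exp_ne_zero _
  field_simp [Real.exp_neg] at this ⊢
  rw [← this, mul_assoc, ← Real.exp_add]; simp

private lemma eq_exp_of_deriv_eq_neg (f : ℝ → ℝ) (hf : Differentiable ℝ f)
    (h : ∀ s, deriv f s = -f s) : ∀ s, f s = f 0 * Real.exp (-s) := by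
  have key : ∀ s, f s * Real.exp s = f 0 := by
    have hd : ∀ s, deriv (fun s => f s * Real.exp s) s = 0 := by
      intro s
      have h1 : HasDerivAt (fun s : ℝ => Real.exp s) (Real.exp s) s := Real.hasDerivAt_exp s
      have h2 : HasDerivAt f (-f s) s := h s ▸ (hf s).hasDerivAt
      have := h2.mul h1
      rw [(show HasDerivAt (fun s => f s * Real.exp s) _ s from this).deriv]; ring
    have hc := is_const_of_deriv_eq_zero
      (f := fun s => f s * Real.exp s)
      (hf.mul Real.differentiable_exp) hd
    intro s
    have := hc s 0
    simpa using this
  intro s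
  have := key s
  rw [Real.exp_neg]
  field_simp
  linarith [this]

/-- A smooth `z : ℝ → ℝ` satisfies `z' - z''' = τ₀` iff
`z(s) = τ₀ s + c₁ eˢ - c₂ e⁻ˢ + c₃`; i.e. the hyperbolic cylindrical curve
`(cosh s, sinh s, z(s))` in `I³_p` has constant torsion `τ₀` iff `z` has this form. -/
theorem constant_torsion_hyperbolic_cylindrical
    (z : ℝ → ℝ) (hz : ContDiff ℝ (⊤ : ℕ∞) z) (τ₀ : ℝ) :
    (∀ s, deriv z s - iteratedDeriv 3 z s = τ₀) ↔
    (∃ c₁ c₂ c₃ : ℝ, ∀ s, z s = τ₀ * s + c₁ * Real.exp s - c₂ * Real.exp (-s) + c₃) := by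
  have hdz : Differentiable ℝ z := hz.differentiable (by simp)
  have hz1 : ContDiff ℝ (⊤ : ℕ∞) (iteratedDeriv 1 z) := smooth_iter z hz 1
  have hz2 : ContDiff ℝ (⊤ : ℕ∞) (iteratedDeriv 2 z) := smooth_iter z hz 2
  have hd2 : Differentiable ℝ (iteratedDeriv 2 z) := hz2.differentiable (by simp)
  constructor
  · intro hODE
    -- h = z - z'' - τ₀ s has zero derivative
    set h : ℝ → ℝ := fun s => z s - iteratedDeriv 2 z s - τ₀ * s with hh
    have hhdiff : Differentiable ℝ h := by
      exact (hdz.sub hd2).sub (differentiable_id.const_mul τ₀)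
    have hderiv : ∀ s, deriv h s = 0 := by
      intro s
      have h1 : HasDerivAt z (deriv z s) s := (hdz s).hasDerivAt
      have h2 : HasDerivAt (iteratedDeriv 2 z) (iteratedDeriv 3 z s) s := by
        have : iteratedDeriv 3 z s = deriv (iteratedDeriv 2 z) s := by
          rw [iteratedDeriv_succ]
        rw [this]
        exact (hd2 s).hasDerivAt
      have h3 : HasDerivAt (fun s : ℝ => τ₀ * s) τ₀ s := by
        simpa using (hasDerivAt_id s).const_mul τ₀
      have := (h1.sub h2).sub h3
      rw [(show HasDerivAt h _ s from this).deriv]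
      have := hODE s
      linarith
    have hconst := is_const_of_deriv_eq_zero hhdiff hderiv
    -- so z - z'' = τ₀ s + h 0
    have hzz : ∀ s, z s - iteratedDeriv 2 z s = τ₀ * s + h 0 := by
      intro s
      have := hconst s 0
      simp only [hh] at this ⊢
      linarith [this]
    -- y = z - τ₀ s - h 0 satisfies y'' = y where y'' = z''
    set y : ℝ → ℝ := fun s => z s - τ₀ * s - h 0 with hy
    have hydiff : Differentiable ℝ y :=
      (hdz.sub (differentiable_id.const_mul τ₀)).sub (differentiable_const _)
    have hyderiv : ∀ s, deriv y s = deriv z s - τ₀ := by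
      intro s
      have h1 : HasDerivAt z (deriv z s) s := (hdz s).hasDerivAt
      have h3 : HasDerivAt (fun s : ℝ => τ₀ * s + h 0) τ₀ s := by
        simpa using ((hasDerivAt_id s).const_mul τ₀).add_const (h 0)
      have h4 : HasDerivAt y (deriv z s - τ₀) s := by
        simpa [hy, sub_sub] using (show HasDerivAt (fun s => z s - (τ₀ * s + h 0)) _ s from h1.sub h3)
      exact h4.deriv
    -- derivative of y equals iteratedDeriv 1 z - τ₀
    have hderiv_eq : deriv y = fun s => iteratedDeriv 1 z s - τ₀ := by
      funext s; rw [hyderiv s, iteratedDeriv_one]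
    have hydiff' : Differentiable ℝ (deriv y) := by
      rw [hderiv_eq]
      exact (hz1.differentiable (by simp)).sub (differentiable_const _)
    have hy2 : ∀ s, deriv (deriv y) s = y s := by
      intro s
      rw [hderiv_eq]
      have h1 : HasDerivAt (iteratedDeriv 1 z) (iteratedDeriv 2 z s) s := by
        have : iteratedDeriv 2 z s = deriv (iteratedDeriv 1 z) s := by
          rw [iteratedDeriv_succ]
        rw [this]
        exact ((hz1.differentiable (by simp)) s).hasDerivAt
      have := (h1.sub_const τ₀).deriv
      rw [this]
      have := hzz s
      simp only [hy]
      linarith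
    -- u = y' + y, v = y' - y
    set u : ℝ → ℝ := fun s => deriv y s + y s with hu
    set v : ℝ → ℝ := fun s => deriv y s - y s with hv
    have hudiff : Differentiable ℝ u := hydiff'.add hydiff
    have hvdiff : Differentiable ℝ v := hydiff'.sub hydiff
    have hu' : ∀ s, deriv u s = u s := by
      intro s
      have h1 : HasDerivAt (deriv y) (y s) s := by
        have := (hydiff' s).hasDerivAt
        rwa [hy2 s] at this
      have h2 : HasDerivAt y (deriv y s) s := (hydiff s).hasDerivAt
      have := (h1.add h2).deriv
      simp only [hu]
      rw [show (fun s => deriv y s + y s) = deriv y + y from rfl, this]; ring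
    have hv' : ∀ s, deriv v s = -v s := by
      intro s
      have h1 : HasDerivAt (deriv y) (y s) s := by
        have := (hydiff' s).hasDerivAt
        rwa [hy2 s] at this
      have h2 : HasDerivAt y (deriv y s) s := (hydiff s).hasDerivAt
      have := (h1.sub h2).deriv
      simp only [hv]
      rw [show (fun s => deriv y s - y s) = deriv y - y from rfl, this]; ring
    have hueq := eq_exp_of_deriv_eq u hudiff hu'
    have hveq := eq_exp_of_deriv_eq_neg v hvdiff hv'
    refine ⟨u 0 / 2, v 0 / 2, h 0, fun s => ?_⟩
    have h1 := hueq s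
    have h2 := hveq s
    have : y s = (u s - v s) / 2 := by simp only [hu, hv]; ring
    rw [h1, h2] at this
    simp only [hy] at this
    linarith
  · rintro ⟨c₁, c₂, c₃, hform⟩
    have hzeq : z = fun s => τ₀ * s + c₁ * Real.exp s - c₂ * Real.exp (-s) + c₃ := funext hform
    have hder : ∀ s, HasDerivAt z (τ₀ + c₁ * Real.exp s + c₂ * Real.exp (-s)) s := by
      intro s
      rw [hzeq]
      have h1 : HasDerivAt (fun s : ℝ => τ₀ * s) τ₀ s := by
        simpa using (hasDerivAt_id s).const_mul τ₀
      have h2 : HasDerivAt (fun s : ℝ => c₁ * Real.exp s) (c₁ * Real.exp s) s :=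
        (Real.hasDerivAt_exp s).const_mul c₁
      have h3 : HasDerivAt (fun s : ℝ => c₂ * Real.exp (-s)) (c₂ * (Real.exp (-s) * (-1))) s :=
        ((hasDerivAt_neg s).exp).const_mul c₂
      have := ((h1.add h2).sub h3).add_const c₃
      convert (show HasDerivAt (fun s : ℝ => τ₀ * s + c₁ * Real.exp s - c₂ * Real.exp (-s) + c₃) _ s from this) using 1; ring
    have hderiv1 : deriv z = fun s => τ₀ + c₁ * Real.exp s + c₂ * Real.exp (-s) :=
      funext fun s => (hder s).deriv
    have hder2 : ∀ s, HasDerivAt (deriv z) (c₁ * Real.exp s - c₂ * Real.exp (-s)) s := by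
      intro s
      rw [hderiv1]
      have h2 : HasDerivAt (fun s : ℝ => c₁ * Real.exp s) (c₁ * Real.exp s) s :=
        (Real.hasDerivAt_exp s).const_mul c₁
      have h3 : HasDerivAt (fun s : ℝ => c₂ * Real.exp (-s)) (c₂ * (Real.exp (-s) * (-1))) s :=
        ((hasDerivAt_neg s).exp).const_mul c₂
      have hA : HasDerivAt (fun s : ℝ => τ₀ + c₁ * Real.exp s) (c₁ * Real.exp s) s :=
        h2.const_add τ₀
      have := hA.add h3
      convert (show HasDerivAt (fun s : ℝ => τ₀ + c₁ * Real.exp s + c₂ * Real.exp (-s)) _ s from this) using 1; ring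
    have hderiv2 : deriv (deriv z) = fun s => c₁ * Real.exp s - c₂ * Real.exp (-s) :=
      funext fun s => (hder2 s).deriv
    have hder3 : ∀ s, HasDerivAt (deriv (deriv z)) (c₁ * Real.exp s + c₂ * Real.exp (-s)) s := by
      intro s
      rw [hderiv2]
      have h2 : HasDerivAt (fun s : ℝ => c₁ * Real.exp s) (c₁ * Real.exp s) s :=
        (Real.hasDerivAt_exp s).const_mul c₁
      have h3 : HasDerivAt (fun s : ℝ => c₂ * Real.exp (-s)) (c₂ * (Real.exp (-s) * (-1))) s :=
        ((hasDerivAt_neg s).exp).const_mul c₂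
      have := h2.sub h3
      convert (show HasDerivAt (fun s : ℝ => c₁ * Real.exp s - c₂ * Real.exp (-s)) _ s from this) using 1; ring
    intro s
    have h3 : iteratedDeriv 3 z s = c₁ * Real.exp s + c₂ * Real.exp (-s) := by
      have : iteratedDeriv 3 z = deriv (deriv (deriv z)) := by
        rw [show (3 : ℕ) = 2 + 1 from rfl, iteratedDeriv_succ,
          show (2 : ℕ) = 1 + 1 from rfl, iteratedDeriv_succ, iteratedDeriv_one]
      rw [this, (hder3 s).deriv]
    rw [h3, hderiv1]
    ring
end

section
/- The surface of revolution r(u,v) = (u cosh v, u sinh v, f(u)) in I³_p, with u > 0 and f smooth, has Gaussian curvature K = f'(u) f''(u)/u and mean curvature H = (f'(u)/u + f''(u))/2. -/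
/-- Pseudo-isotropic scalar product of non-isotropic vectors. -/
def pseudoIsoIP (a b : Fin 3 → ℝ) : ℝ := a 0 * b 0 - a 1 * b 1

/-- Partial derivative of a parameterized surface in direction `v`. -/
noncomputable def surfPD (v : ℝ × ℝ) (r : ℝ × ℝ → Fin 3 → ℝ) (p : ℝ × ℝ) : Fin 3 → ℝ :=
  fderiv ℝ r p v

/-- Component of the first fundamental form. -/
noncomputable def surfG (v w : ℝ × ℝ) (r : ℝ × ℝ → Fin 3 → ℝ) (p : ℝ × ℝ) : ℝ :=
  pseudoIsoIP (surfPD v r p) (surfPD w r p)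

/-- Determinant of the first fundamental form. -/
noncomputable def surfDetG (r : ℝ × ℝ → Fin 3 → ℝ) (p : ℝ × ℝ) : ℝ :=
  surfG (1, 0) (1, 0) r p * surfG (0, 1) (0, 1) r p - (surfG (1, 0) (0, 1) r p) ^ 2

/-- Component of the second fundamental form:
`h_{vw} = det(r_{u₁}, r_{u₂}, r_{vw}) / √|det g|`. -/
noncomputable def surfH (v w : ℝ × ℝ) (r : ℝ × ℝ → Fin 3 → ℝ) (p : ℝ × ℝ) : ℝ :=
  Matrix.det (Matrix.of ![surfPD (1, 0) r p, surfPD (0, 1) r p,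
    surfPD w (fun q => surfPD v r q) p]) / Real.sqrt |surfDetG r p|

/-- Gaussian curvature `K = det h / det g`. -/
noncomputable def surfK (r : ℝ × ℝ → Fin 3 → ℝ) (p : ℝ × ℝ) : ℝ :=
  (surfH (1, 0) (1, 0) r p * surfH (0, 1) (0, 1) r p - (surfH (1, 0) (0, 1) r p) ^ 2) /
    surfDetG r p

/-- Mean curvature `H = (g₁₁h₂₂ - 2g₁₂h₁₂ + g₂₂h₁₁)/(2 det g)`. -/
noncomputable def surfMeanH (r : ℝ × ℝ → Fin 3 → ℝ) (p : ℝ × ℝ) : ℝ :=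
  (surfG (1, 0) (1, 0) r p * surfH (0, 1) (0, 1) r p
    - 2 * surfG (1, 0) (0, 1) r p * surfH (1, 0) (0, 1) r p
    + surfG (0, 1) (0, 1) r p * surfH (1, 0) (1, 0) r p) / (2 * surfDetG r p)

lemma pdU (f : ℝ → ℝ) (hf : Differentiable ℝ f) (q : ℝ × ℝ) :
    surfPD (1, 0) (fun x => ![x.1 * Real.cosh x.2, x.1 * Real.sinh x.2, f x.1]) q
      = ![Real.cosh q.2, Real.sinh q.2, deriv f q.1] ∧
    surfPD (0, 1) (fun x => ![x.1 * Real.cosh x.2, x.1 * Real.sinh x.2, f x.1]) q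
      = ![q.1 * Real.sinh q.2, q.1 * Real.cosh q.2, 0] := by
  have h0 : HasFDerivAt (fun x : ℝ × ℝ => x.1 * Real.cosh x.2)
      (q.1 • (Real.sinh q.2 • ContinuousLinearMap.snd ℝ ℝ ℝ) +
        Real.cosh q.2 • ContinuousLinearMap.fst ℝ ℝ ℝ) q :=
    (hasFDerivAt_fst).mul ((Real.hasDerivAt_cosh q.2).comp_hasFDerivAt q hasFDerivAt_snd)
  have h1 : HasFDerivAt (fun x : ℝ × ℝ => x.1 * Real.sinh x.2)
      (q.1 • (Real.cosh q.2 • ContinuousLinearMap.snd ℝ ℝ ℝ) +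
        Real.sinh q.2 • ContinuousLinearMap.fst ℝ ℝ ℝ) q :=
    (hasFDerivAt_fst).mul ((Real.hasDerivAt_sinh q.2).comp_hasFDerivAt q hasFDerivAt_snd)
  have h2 : HasFDerivAt (fun x : ℝ × ℝ => f x.1)
      (deriv f q.1 • ContinuousLinearMap.fst ℝ ℝ ℝ) q :=
    ((hf q.1).hasDerivAt).comp_hasFDerivAt q hasFDerivAt_fst
  have hd : ∀ i, DifferentiableAt ℝ (fun x : ℝ × ℝ =>
      (![x.1 * Real.cosh x.2, x.1 * Real.sinh x.2, f x.1] : Fin 3 → ℝ) i) q := by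
    intro i; fin_cases i
    · exact h0.differentiableAt
    · exact h1.differentiableAt
    · exact h2.differentiableAt
  constructor <;> (funext i; rw [surfPD, fderiv_pi hd, ContinuousLinearMap.pi_apply]; fin_cases i)
  · show fderiv ℝ (fun x : ℝ × ℝ => x.1 * Real.cosh x.2) q (1, 0) = Real.cosh q.2
    rw [h0.fderiv]; simp
  · show fderiv ℝ (fun x : ℝ × ℝ => x.1 * Real.sinh x.2) q (1, 0) = Real.sinh q.2
    rw [h1.fderiv]; simp
  · show fderiv ℝ (fun x : ℝ × ℝ => f x.1) q (1, 0) = deriv f q.1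
    rw [h2.fderiv]; simp
  · show fderiv ℝ (fun x : ℝ × ℝ => x.1 * Real.cosh x.2) q (0, 1) = q.1 * Real.sinh q.2
    rw [h0.fderiv]; simp
  · show fderiv ℝ (fun x : ℝ × ℝ => x.1 * Real.sinh x.2) q (0, 1) = q.1 * Real.cosh q.2
    rw [h1.fderiv]; simp
  · show fderiv ℝ (fun x : ℝ × ℝ => f x.1) q (0, 1) = 0
    rw [h2.fderiv]; simp

lemma pdUU (g : ℝ → ℝ) (hg : Differentiable ℝ g) (q : ℝ × ℝ) :
    surfPD (1, 0) (fun x => ![Real.cosh x.2, Real.sinh x.2, g x.1]) q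
      = ![0, 0, deriv g q.1] ∧
    surfPD (0, 1) (fun x => ![Real.cosh x.2, Real.sinh x.2, g x.1]) q
      = ![Real.sinh q.2, Real.cosh q.2, 0] := by
  have h0 : HasFDerivAt (fun x : ℝ × ℝ => Real.cosh x.2)
      (Real.sinh q.2 • ContinuousLinearMap.snd ℝ ℝ ℝ) q :=
    (Real.hasDerivAt_cosh q.2).comp_hasFDerivAt q hasFDerivAt_snd
  have h1 : HasFDerivAt (fun x : ℝ × ℝ => Real.sinh x.2)
      (Real.cosh q.2 • ContinuousLinearMap.snd ℝ ℝ ℝ) q :=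
    (Real.hasDerivAt_sinh q.2).comp_hasFDerivAt q hasFDerivAt_snd
  have h2 : HasFDerivAt (fun x : ℝ × ℝ => g x.1)
      (deriv g q.1 • ContinuousLinearMap.fst ℝ ℝ ℝ) q :=
    ((hg q.1).hasDerivAt).comp_hasFDerivAt q hasFDerivAt_fst
  have hd : ∀ i, DifferentiableAt ℝ (fun x : ℝ × ℝ =>
      (![Real.cosh x.2, Real.sinh x.2, g x.1] : Fin 3 → ℝ) i) q := by
    intro i; fin_cases i
    · exact h0.differentiableAt
    · exact h1.differentiableAt
    · exact h2.differentiableAt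
  constructor <;> (funext i; rw [surfPD, fderiv_pi hd, ContinuousLinearMap.pi_apply]; fin_cases i)
  · show fderiv ℝ (fun x : ℝ × ℝ => Real.cosh x.2) q (1, 0) = 0
    rw [h0.fderiv]; simp
  · show fderiv ℝ (fun x : ℝ × ℝ => Real.sinh x.2) q (1, 0) = 0
    rw [h1.fderiv]; simp
  · show fderiv ℝ (fun x : ℝ × ℝ => g x.1) q (1, 0) = deriv g q.1
    rw [h2.fderiv]; simp
  · show fderiv ℝ (fun x : ℝ × ℝ => Real.cosh x.2) q (0, 1) = Real.sinh q.2
    rw [h0.fderiv]; simp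
  · show fderiv ℝ (fun x : ℝ × ℝ => Real.sinh x.2) q (0, 1) = Real.cosh q.2
    rw [h1.fderiv]; simp
  · show fderiv ℝ (fun x : ℝ × ℝ => g x.1) q (0, 1) = 0
    rw [h2.fderiv]; simp

lemma pdVV (q : ℝ × ℝ) :
    surfPD (0, 1) (fun x => ![x.1 * Real.sinh x.2, x.1 * Real.cosh x.2, (0:ℝ)]) q
      = ![q.1 * Real.cosh q.2, q.1 * Real.sinh q.2, 0] := by
  have h0 : HasFDerivAt (fun x : ℝ × ℝ => x.1 * Real.sinh x.2)
      (q.1 • (Real.cosh q.2 • ContinuousLinearMap.snd ℝ ℝ ℝ) +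
        Real.sinh q.2 • ContinuousLinearMap.fst ℝ ℝ ℝ) q :=
    (hasFDerivAt_fst).mul ((Real.hasDerivAt_sinh q.2).comp_hasFDerivAt q hasFDerivAt_snd)
  have h1 : HasFDerivAt (fun x : ℝ × ℝ => x.1 * Real.cosh x.2)
      (q.1 • (Real.sinh q.2 • ContinuousLinearMap.snd ℝ ℝ ℝ) +
        Real.cosh q.2 • ContinuousLinearMap.fst ℝ ℝ ℝ) q :=
    (hasFDerivAt_fst).mul ((Real.hasDerivAt_cosh q.2).comp_hasFDerivAt q hasFDerivAt_snd)
  have h2 : HasFDerivAt (fun _ : ℝ × ℝ => (0:ℝ)) (0 : ℝ × ℝ →L[ℝ] ℝ) q :=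
    hasFDerivAt_const 0 q
  have hd : ∀ i, DifferentiableAt ℝ (fun x : ℝ × ℝ =>
      (![x.1 * Real.sinh x.2, x.1 * Real.cosh x.2, (0:ℝ)] : Fin 3 → ℝ) i) q := by
    intro i; fin_cases i
    · exact h0.differentiableAt
    · exact h1.differentiableAt
    · exact h2.differentiableAt
  funext i; rw [surfPD, fderiv_pi hd, ContinuousLinearMap.pi_apply]; fin_cases i
  · show fderiv ℝ (fun x : ℝ × ℝ => x.1 * Real.sinh x.2) q (0, 1) = q.1 * Real.cosh q.2
    rw [h0.fderiv]; simp
  · show fderiv ℝ (fun x : ℝ × ℝ => x.1 * Real.cosh x.2) q (0, 1) = q.1 * Real.sinh q.2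
    rw [h1.fderiv]; simp
  · show fderiv ℝ (fun _ : ℝ × ℝ => (0:ℝ)) q (0, 1) = 0
    rw [h2.fderiv]; simp

/-- The surface of revolution `r(u,v) = (u cosh v, u sinh v, f(u))` in `I³_p` has
Gaussian curvature `K = f'f''/u` and mean curvature `H = (f'/u + f'')/2`. -/
theorem surface_of_revolution_curvatures
    (f : ℝ → ℝ) (hf : ContDiff ℝ (⊤ : ℕ∞) f)
    (r : ℝ × ℝ → Fin 3 → ℝ)
    (hr : ∀ p, r p = ![p.1 * Real.cosh p.2, p.1 * Real.sinh p.2, f p.1])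
    (p : ℝ × ℝ) (hp : 0 < p.1) :
    surfK r p = deriv f p.1 * iteratedDeriv 2 f p.1 / p.1 ∧
    surfMeanH r p = (deriv f p.1 / p.1 + iteratedDeriv 2 f p.1) / 2 := by
  have hrfun : r = fun x => ![x.1 * Real.cosh x.2, x.1 * Real.sinh x.2, f x.1] := funext hr
  subst hrfun
  have hfd : Differentiable ℝ f := hf.differentiable (by simp)
  have hf' : ContDiff ℝ ((⊤:ℕ∞):WithTop ℕ∞) f := hf.of_le (by simp)
  have hfd' : Differentiable ℝ (deriv f) :=
    (contDiff_infty_iff_deriv.mp hf').2.differentiable (by simp)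
  set u := p.1
  set v := p.2
  have hru := (pdU f hfd p).1
  have hrv := (pdU f hfd p).2
  have hinU : (fun q => surfPD (1, 0)
        (fun x => ![x.1 * Real.cosh x.2, x.1 * Real.sinh x.2, f x.1]) q)
      = fun q => ![Real.cosh q.2, Real.sinh q.2, deriv f q.1] :=
    funext fun q => (pdU f hfd q).1
  have hinV : (fun q => surfPD (0, 1)
        (fun x => ![x.1 * Real.cosh x.2, x.1 * Real.sinh x.2, f x.1]) q)
      = fun q => ![q.1 * Real.sinh q.2, q.1 * Real.cosh q.2, 0] :=
    funext fun q => (pdU f hfd q).2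
  have hruu : surfPD (1, 0) (fun q => ![Real.cosh q.2, Real.sinh q.2, deriv f q.1]) p
      = ![0, 0, deriv (deriv f) u] := (pdUU (deriv f) hfd' p).1
  have hruv : surfPD (0, 1) (fun q => ![Real.cosh q.2, Real.sinh q.2, deriv f q.1]) p
      = ![Real.sinh v, Real.cosh v, 0] := (pdUU (deriv f) hfd' p).2
  have hrvv : surfPD (0, 1) (fun q => ![q.1 * Real.sinh q.2, q.1 * Real.cosh q.2, (0:ℝ)]) p
      = ![u * Real.cosh v, u * Real.sinh v, 0] := pdVV p
  have hch : Real.cosh v ^ 2 - Real.sinh v ^ 2 = 1 := Real.cosh_sq_sub_sinh_sq v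
  have hg11 : surfG (1, 0) (1, 0) (fun x => ![x.1 * Real.cosh x.2, x.1 * Real.sinh x.2, f x.1]) p = 1 := by
    rw [surfG, hru, pseudoIsoIP]; simp; nlinarith [hch]
  have hg12 : surfG (1, 0) (0, 1) (fun x => ![x.1 * Real.cosh x.2, x.1 * Real.sinh x.2, f x.1]) p = 0 := by
    rw [surfG, hru, hrv, pseudoIsoIP]; simp; ring
  have hg22 : surfG (0, 1) (0, 1) (fun x => ![x.1 * Real.cosh x.2, x.1 * Real.sinh x.2, f x.1]) p = -u ^ 2 := by
    rw [surfG, hrv, pseudoIsoIP]; simp; nlinarith [hch]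
  have hdetG : surfDetG (fun x => ![x.1 * Real.cosh x.2, x.1 * Real.sinh x.2, f x.1]) p = -u ^ 2 := by
    rw [surfDetG, hg11, hg12, hg22]; ring
  have hsqrt : Real.sqrt |surfDetG (fun x =>
      ![x.1 * Real.cosh x.2, x.1 * Real.sinh x.2, f x.1]) p| = u := by
    rw [hdetG, abs_neg, abs_of_nonneg (sq_nonneg u), Real.sqrt_sq hp.le]
  have hu : u ≠ 0 := hp.ne'
  have h11 : surfH (1, 0) (1, 0) (fun x => ![x.1 * Real.cosh x.2, x.1 * Real.sinh x.2, f x.1]) p = deriv (deriv f) u := by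
    rw [surfH, hsqrt, hinU, hru, hrv, hruu, Matrix.det_fin_three]
    simp [Matrix.of_apply, Matrix.vecHead, Matrix.vecTail]
    rw [div_eq_iff hu]
    linear_combination (p.1 * deriv (deriv f) p.1) * hch
  have h12 : surfH (1, 0) (0, 1) (fun x => ![x.1 * Real.cosh x.2, x.1 * Real.sinh x.2, f x.1]) p = 0 := by
    rw [surfH, hsqrt, hinU, hru, hrv, hruv, Matrix.det_fin_three]
    simp [Matrix.of_apply, Matrix.vecHead, Matrix.vecTail]
    left; ring
  have h22 : surfH (0, 1) (0, 1) (fun x => ![x.1 * Real.cosh x.2, x.1 * Real.sinh x.2, f x.1]) p = -u * deriv f u := by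
    rw [surfH, hsqrt, hinV, hru, hrv, hrvv, Matrix.det_fin_three]
    simp [Matrix.of_apply, Matrix.vecHead, Matrix.vecTail]
    rw [div_eq_iff hu]
    linear_combination (-(p.1^2) * deriv f p.1) * hch
  have hiter : iteratedDeriv 2 f u = deriv (deriv f) u := by
    rw [iteratedDeriv_succ, iteratedDeriv_one]
  constructor
  · rw [surfK, h11, h12, h22, hdetG, hiter]
    field_simp
    ring
  · rw [surfMeanH, hg11, hg12, hg22, h11, h12, h22, hdetG, hiter]
    field_simp
    ring
end

section
/- Let f be smooth on a connected interval I ⊆ (0,∞), and suppose the surface of revolution (u cosh v, u sinh v, f(u)) in I³_p satisfies H² = K, i.e., ((f'/u + f'')/2)² = f'f''/u on I. Then f'/u - f'' ≡ 0, and hence f(u) = (c₁/2)u² + c₂ for constants c₁, c₂ ∈ ℝ. -/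
/-- If the surface of revolution `(u cosh v, u sinh v, f(u))` in `I³_p` satisfies
`H² = K`, i.e. `((f'/u + f'')/2)² = f'f''/u` on an interval `I ⊆ (0,∞)`, then
`f'/u - f'' ≡ 0` and `f(u) = (c₁/2)u² + c₂` (a sphere of parabolic type). -/
theorem revolution_surface_H_sq_eq_K
    (a b : ℝ) (hab : Set.Ioo a b ⊆ Set.Ioi (0 : ℝ))
    (f : ℝ → ℝ) (hf : ContDiff ℝ (⊤ : ℕ∞) f)
    (heq : ∀ u ∈ Set.Ioo a b,
      ((deriv f u / u + iteratedDeriv 2 f u) / 2) ^ 2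
        = deriv f u * iteratedDeriv 2 f u / u) :
    (∀ u ∈ Set.Ioo a b, deriv f u / u - iteratedDeriv 2 f u = 0) ∧
    (∃ c₁ c₂ : ℝ, ∀ u ∈ Set.Ioo a b, f u = c₁ / 2 * u ^ 2 + c₂) := by
  -- Part 1: pointwise algebra
  have hpt : ∀ u ∈ Set.Ioo a b, deriv f u / u - iteratedDeriv 2 f u = 0 := by
    intro u hu
    have hu0 : (0 : ℝ) < u := hab hu
    have h := heq u hu
    have hA : deriv f u * iteratedDeriv 2 f u / u
        = (deriv f u / u) * iteratedDeriv 2 f u := by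
      field_simp
    rw [hA] at h
    set A := deriv f u / u
    set B := iteratedDeriv 2 f u
    have hsq : (A - B) ^ 2 = 0 := by nlinarith [h]
    exact pow_eq_zero_iff (n := 2) (by norm_num) |>.mp hsq
  refine ⟨hpt, ?_⟩
  rcases Set.eq_empty_or_nonempty (Set.Ioo a b) with he | ⟨x₀, hx₀⟩
  · exact ⟨0, 0, fun u hu => absurd hu (by simp [he])⟩
  -- derivative facts
  have hd1 : Differentiable ℝ f := hf.differentiable (by simp)
  have hf' : ContDiff ℝ ((⊤:ℕ∞):WithTop ℕ∞) f := hf.of_le (by simp)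
  have hd2 : Differentiable ℝ (deriv f) :=
    (contDiff_infty_iff_deriv.mp hf').2.differentiable (by simp)
  have hderiv2 : ∀ u, HasDerivAt (deriv f) (iteratedDeriv 2 f u) u := by
    intro u
    have : iteratedDeriv 2 f u = deriv (deriv f) u := by
      rw [iteratedDeriv_succ, iteratedDeriv_one]
    rw [this]
    exact (hd2 u).hasDerivAt
  -- g = deriv f / id has derivative 0 on Ioo a b
  set s := Set.Ioo a b with hs
  have hconv : Convex ℝ s := convex_Ioo a b
  have hopen : IsOpen s := isOpen_Ioo
  set g : ℝ → ℝ := fun u => deriv f u / u with hg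
  have hgd : ∀ u ∈ s, HasDerivAt g 0 u := by
    intro u hu
    have hu0 : (0 : ℝ) < u := hab hu
    have h1 : HasDerivAt (fun x : ℝ => x) 1 u := hasDerivAt_id u
    have h2 := (hderiv2 u).div h1 (ne_of_gt hu0)
    have heq2 : iteratedDeriv 2 f u = deriv f u / u := by
      have := hpt u hu; linarith
    have : (iteratedDeriv 2 f u * u - deriv f u * 1) / u ^ 2 = 0 := by
      rw [heq2]; field_simp; ring
    rw [this] at h2
    exact h2
  have hgdiff : DifferentiableOn ℝ g s := fun u hu => ((hgd u hu).differentiableAt).differentiableWithinAt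
  have hgconst : ∀ u ∈ s, g u = g x₀ := by
    intro u hu
    refine hconv.is_const_of_fderivWithin_eq_zero hgdiff ?_ hu hx₀
    intro z hz
    have := (hgd z hz).hasFDerivAt
    rw [fderivWithin_eq_fderiv (hopen.uniqueDiffOn z hz) (hgd z hz).differentiableAt,
      this.fderiv]
    ext
    simp
  set c₁ := g x₀ with hc₁
  -- h = f - c₁/2 * u^2 has derivative 0 on s
  set F : ℝ → ℝ := fun u => f u - c₁ / 2 * u ^ 2 with hF
  have hFd : ∀ u ∈ s, HasDerivAt F 0 u := by
    intro u hu
    have hu0 : (0 : ℝ) < u := hab hu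
    have h1 : HasDerivAt (fun x : ℝ => c₁ / 2 * x ^ 2) (c₁ / 2 * (2 * u)) u := by
      simpa using ((hasDerivAt_pow 2 u).const_mul (c₁ / 2))
    have h2 := (hd1 u).hasDerivAt.sub h1
    have hderu : deriv f u = c₁ * u := by
      have := hgconst u hu
      rw [hg] at this
      field_simp at this
      simpa [hc₁, mul_comm] using this
    have : deriv f u - c₁ / 2 * (2 * u) = 0 := by rw [hderu]; ring
    rw [this] at h2
    exact h2
  have hFdiff : DifferentiableOn ℝ F s := fun u hu => ((hFd u hu).differentiableAt).differentiableWithinAt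
  refine ⟨c₁, F x₀, fun u hu => ?_⟩
  have : F u = F x₀ := by
    refine hconv.is_const_of_fderivWithin_eq_zero hFdiff ?_ hu hx₀
    intro z hz
    have := (hFd z hz).hasFDerivAt
    rw [fderivWithin_eq_fderiv (hopen.uniqueDiffOn z hz) (hFd z hz).differentiableAt,
      this.fderiv]
    ext
    simp
  have h2 : f u - c₁ / 2 * u ^ 2 = F x₀ := this
  linarith
end
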